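/- arXiv:2204.00730 — 3 statements merged into one kernel-verified Lean document; each statement's English description precedes it below -/
import Mathlib

section
/- Let H : ℝⁿ × ℝⁿ × ℝ × ℝᴷ → ℝ be a smooth Hamiltonian H(q,p,S,N₁,...,N_K), F_ext, F_fr : ℝⁿ × ℝⁿ × ℝ × ℝᴷ → ℝⁿ force fields, and 𝒥 : Fin K × Fin K → ℝ antisymmetric fluxes (𝒥(ℓ,k) = -𝒥(k,ℓ)), possibly depending on the state. Suppose smooth curves q(t), p(t), S(t), W(t) ∈ ℝᴷ, N(t) ∈ ℝᴷ satisfy: q' = ∂H/∂p; p' = -∂H/∂q + F_fr + F_ext; (W^k)' = ∂H/∂N_k for each k; (N_k)' = Σ_ℓ 𝒥(ℓ,k); and -(∂H/∂S)·S' = ⟨F_fr, q'⟩ + Σ_{k,ℓ} 𝒥(ℓ,k)·(W^k)'. Then d/dt H(q(t),p(t),S(t),N(t)) = ⟨F_ext, q'(t)⟩. -/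
open Function

lemma hasDerivAt_update_single {m : ℕ} (x : Fin m → ℝ) (i : Fin m) (y : ℝ) :
    HasDerivAt (fun z => Function.update x i z) (Pi.single i 1) y := by
  apply hasDerivAt_pi.2
  intro j
  simp only [Function.update_apply, Pi.single_apply]
  by_cases h : j = i <;> simp [h, hasDerivAt_id', hasDerivAt_const]

/-- First law for a simple adiabatically closed system with internal mass
transfer among `K` compartments: the total energy changes only by the
external mechanical power. -/
theorem first_law_mass_transfer
    (n K : ℕ)
    (H : (Fin n → ℝ) → (Fin n → ℝ) → ℝ → (Fin K → ℝ) → ℝ)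
    (hH : ContDiff ℝ (⊤ : ℕ∞) (fun x : (Fin n → ℝ) × (Fin n → ℝ) × ℝ × (Fin K → ℝ) =>
      H x.1 x.2.1 x.2.2.1 x.2.2.2))
    (Fext Ffr : (Fin n → ℝ) → (Fin n → ℝ) → ℝ → (Fin K → ℝ) → Fin n → ℝ)
    (J : ℝ → Fin K → Fin K → ℝ)   -- flux from compartment ℓ to k, along the curve
    (hJ : ∀ t k l, J t l k = -J t k l)
    (q p : ℝ → Fin n → ℝ) (S : ℝ → ℝ) (W N : ℝ → Fin K → ℝ)
    (hq : ContDiff ℝ (⊤ : ℕ∞) (fun t => q t)) (hp : ContDiff ℝ (⊤ : ℕ∞) (fun t => p t))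
    (hS : ContDiff ℝ (⊤ : ℕ∞) S)
    (hW : ContDiff ℝ (⊤ : ℕ∞) (fun t => W t)) (hN : ContDiff ℝ (⊤ : ℕ∞) (fun t => N t))
    (h1 : ∀ t i, deriv (fun s => q s i) t =
      deriv (fun x => H (q t) (Function.update (p t) i x) (S t) (N t)) (p t i))
    (h2 : ∀ t i, deriv (fun s => p s i) t =
      -deriv (fun x => H (Function.update (q t) i x) (p t) (S t) (N t)) (q t i)
      + Ffr (q t) (p t) (S t) (N t) i + Fext (q t) (p t) (S t) (N t) i)
    (h3 : ∀ t k, deriv (fun s => W s k) t =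
      deriv (fun x => H (q t) (p t) (S t) (Function.update (N t) k x)) (N t k))
    (h4 : ∀ t k, deriv (fun s => N s k) t = ∑ l, J t l k)
    (h5 : ∀ t, -(deriv (fun x => H (q t) (p t) x (N t)) (S t)) * deriv S t
      = (∑ i, Ffr (q t) (p t) (S t) (N t) i * deriv (fun s => q s i) t)
        + ∑ k, ∑ l, J t l k * deriv (fun s => W s k) t) :
    ∀ t, deriv (fun s => H (q s) (p s) (S s) (N s)) t
      = ∑ i, Fext (q t) (p t) (S t) (N t) i * deriv (fun s => q s i) t := by
  intro t
  set F : (Fin n → ℝ) × (Fin n → ℝ) × ℝ × (Fin K → ℝ) → ℝ :=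
    fun x => H x.1 x.2.1 x.2.2.1 x.2.2.2 with hFdef
  have hqd : HasDerivAt q (deriv q t) t := ((hq.differentiable (by simp)) t).hasDerivAt
  have hpd : HasDerivAt p (deriv p t) t := ((hp.differentiable (by simp)) t).hasDerivAt
  have hSd : HasDerivAt S (deriv S t) t := ((hS.differentiable (by simp)) t).hasDerivAt
  have hNd : HasDerivAt N (deriv N t) t := ((hN.differentiable (by simp)) t).hasDerivAt
  have hq' : ∀ i, deriv (fun s => q s i) t = deriv q t i :=
    fun i => (hasDerivAt_pi.1 hqd i).deriv
  have hp' : ∀ i, deriv (fun s => p s i) t = deriv p t i :=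
    fun i => (hasDerivAt_pi.1 hpd i).deriv
  have hN' : ∀ k, deriv (fun s => N s k) t = deriv N t k :=
    fun k => (hasDerivAt_pi.1 hNd k).deriv
  have hc : HasDerivAt (fun s => (q s, p s, S s, N s))
      (deriv q t, deriv p t, deriv S t, deriv N t) t :=
    HasDerivAt.prodMk hqd (HasDerivAt.prodMk hpd (HasDerivAt.prodMk hSd hNd))
  have hFd : HasFDerivAt F (fderiv ℝ F (q t, p t, S t, N t)) (q t, p t, S t, N t) :=
    ((hH.differentiable (by simp)) _).hasFDerivAt
  set L := fderiv ℝ F (q t, p t, S t, N t) with hLdef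
  have hcomp : HasDerivAt (fun s => H (q s) (p s) (S s) (N s))
      (L (deriv q t, deriv p t, deriv S t, deriv N t)) t := by
    have := hFd.comp_hasDerivAt t hc; exact this
  -- partial derivatives
  have hpart_q : ∀ i, L ((Pi.single i 1 : Fin n → ℝ), 0, 0, 0)
      = deriv (fun x => H (Function.update (q t) i x) (p t) (S t) (N t)) (q t i) := by
    intro i
    have hγ : HasDerivAt (fun x : ℝ =>
        ((Function.update (q t) i x : Fin n → ℝ), p t, S t, N t))
        ((Pi.single i 1 : Fin n → ℝ), (0 : Fin n → ℝ), (0 : ℝ), (0 : Fin K → ℝ)) (q t i) :=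
      HasDerivAt.prodMk (hasDerivAt_update_single _ _ _)
        (HasDerivAt.prodMk (hasDerivAt_const _ _) (HasDerivAt.prodMk (hasDerivAt_const _ _) (hasDerivAt_const _ _)))
    have hFd' : HasFDerivAt F L (Function.update (q t) i (q t i), p t, S t, N t) := by
      rw [Function.update_eq_self]; exact hFd
    exact (hFd'.comp_hasDerivAt (q t i) hγ).deriv.symm
  have hpart_p : ∀ i, L (0, (Pi.single i 1 : Fin n → ℝ), 0, 0)
      = deriv (fun x => H (q t) (Function.update (p t) i x) (S t) (N t)) (p t i) := by
    intro i
    have hγ : HasDerivAt (fun x : ℝ =>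
        (q t, (Function.update (p t) i x : Fin n → ℝ), S t, N t))
        ((0 : Fin n → ℝ), (Pi.single i 1 : Fin n → ℝ), (0 : ℝ), (0 : Fin K → ℝ)) (p t i) :=
      HasDerivAt.prodMk (hasDerivAt_const _ _) (HasDerivAt.prodMk (hasDerivAt_update_single _ _ _)
        (HasDerivAt.prodMk (hasDerivAt_const _ _) (hasDerivAt_const _ _)))
    have hFd' : HasFDerivAt F L (q t, Function.update (p t) i (p t i), S t, N t) := by
      rw [Function.update_eq_self]; exact hFd
    exact (hFd'.comp_hasDerivAt (p t i) hγ).deriv.symm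
  have hpart_S : L (0, 0, 1, 0)
      = deriv (fun x => H (q t) (p t) x (N t)) (S t) := by
    have hγ : HasDerivAt (fun x : ℝ => (q t, p t, x, N t))
        ((0 : Fin n → ℝ), (0 : Fin n → ℝ), (1 : ℝ), (0 : Fin K → ℝ)) (S t) :=
      HasDerivAt.prodMk (hasDerivAt_const _ _) (HasDerivAt.prodMk (hasDerivAt_const _ _)
        (HasDerivAt.prodMk (hasDerivAt_id _) (hasDerivAt_const _ _)))
    exact (hFd.comp_hasDerivAt (S t) hγ).deriv.symm
  have hpart_N : ∀ k, L (0, 0, 0, (Pi.single k 1 : Fin K → ℝ))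
      = deriv (fun x => H (q t) (p t) (S t) (Function.update (N t) k x)) (N t k) := by
    intro k
    have hγ : HasDerivAt (fun x : ℝ =>
        (q t, p t, S t, (Function.update (N t) k x : Fin K → ℝ)))
        ((0 : Fin n → ℝ), (0 : Fin n → ℝ), (0 : ℝ), (Pi.single k 1 : Fin K → ℝ)) (N t k) :=
      HasDerivAt.prodMk (hasDerivAt_const _ _) (HasDerivAt.prodMk (hasDerivAt_const _ _)
        (HasDerivAt.prodMk (hasDerivAt_const _ _) (hasDerivAt_update_single _ _ _)))
    have hFd' : HasFDerivAt F L (q t, p t, S t, Function.update (N t) k (N t k)) := by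
      rw [Function.update_eq_self]; exact hFd
    exact (hFd'.comp_hasDerivAt (N t k) hγ).deriv.symm
  -- linearity decomposition
  have hdecomp : (deriv q t, deriv p t, deriv S t, deriv N t)
      = (∑ i, deriv q t i • ((Pi.single i 1 : Fin n → ℝ), (0 : Fin n → ℝ), (0:ℝ), (0 : Fin K → ℝ)))
      + (∑ i, deriv p t i • ((0 : Fin n → ℝ), (Pi.single i 1 : Fin n → ℝ), (0:ℝ), (0 : Fin K → ℝ)))
      + deriv S t • ((0 : Fin n → ℝ), (0 : Fin n → ℝ), (1:ℝ), (0 : Fin K → ℝ))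
      + (∑ k, deriv N t k • ((0 : Fin n → ℝ), (0 : Fin n → ℝ), (0:ℝ), (Pi.single k 1 : Fin K → ℝ))) := by
    have e1 : ∀ (m : ℕ) (v : Fin m → ℝ), (∑ i, v i • (Pi.single i 1 : Fin m → ℝ)) = v := by
      intro m v
      have : ∀ i, v i • (Pi.single i 1 : Fin m → ℝ) = Pi.single i (v i) := by
        intro i
        ext j
        by_cases h : j = i <;> simp [h, Pi.single_apply]
      simp_rw [this]
      exact Finset.univ_sum_single v
    ext <;> simp [Prod.fst_sum, Prod.snd_sum, e1]
  have hLval : L (deriv q t, deriv p t, deriv S t, deriv N t)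
      = (∑ i, deriv q t i * L ((Pi.single i 1 : Fin n → ℝ), 0, 0, 0))
      + (∑ i, deriv p t i * L (0, (Pi.single i 1 : Fin n → ℝ), 0, 0))
      + deriv S t * L (0, 0, 1, 0)
      + ∑ k, deriv N t k * L (0, 0, 0, (Pi.single k 1 : Fin K → ℝ)) := by
    rw [hdecomp]
    simp only [map_add, map_sum, map_smul, smul_eq_mul]
  have hderiv0 : deriv (fun s => H (q s) (p s) (S s) (N s)) t
      = L (deriv q t, deriv p t, deriv S t, deriv N t) := hcomp.deriv
  rw [hderiv0, hLval]
  -- plug in equations of motion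
  have eq_q : ∀ i, L ((Pi.single i 1 : Fin n → ℝ), 0, 0, 0)
      = Ffr (q t) (p t) (S t) (N t) i + Fext (q t) (p t) (S t) (N t) i - deriv p t i := by
    intro i
    have h := h2 t i
    rw [hp' i] at h
    rw [hpart_q i]
    linarith
  have eq_p : ∀ i, L (0, (Pi.single i 1 : Fin n → ℝ), 0, 0) = deriv q t i := by
    intro i
    rw [hpart_p i, ← h1 t i, hq' i]
  have eq_N : ∀ k, L (0, 0, 0, (Pi.single k 1 : Fin K → ℝ)) = deriv (fun s => W s k) t := by
    intro k
    rw [hpart_N k, ← h3 t k]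
  have eq_Nk : ∀ k, deriv N t k = ∑ l, J t l k := fun k => (hN' k).symm.trans (h4 t k)
  have eq_S : deriv S t * L (0, 0, 1, 0)
      = -((∑ i, Ffr (q t) (p t) (S t) (N t) i * deriv q t i)
        + ∑ k, ∑ l, J t l k * deriv (fun s => W s k) t) := by
    have h := h5 t
    rw [← hpart_S] at h
    simp_rw [hq'] at h
    linarith
  simp_rw [eq_q, eq_p, eq_N, eq_Nk, hq']
  rw [eq_S]
  simp_rw [Finset.sum_mul]
  have hsum : (∑ i, deriv q t i * (Ffr (q t) (p t) (S t) (N t) i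
        + Fext (q t) (p t) (S t) (N t) i - deriv p t i))
      + (∑ i, deriv p t i * deriv q t i)
      - (∑ i, Ffr (q t) (p t) (S t) (N t) i * deriv q t i)
      = ∑ i, Fext (q t) (p t) (S t) (N t) i * deriv q t i := by
    rw [← Finset.sum_add_distrib, ← Finset.sum_sub_distrib]
    apply Finset.sum_congr rfl
    intro i _
    ring
  linarith
end

section
/- Let H be as in the mass-transfer system, with temperature T := ∂H/∂S > 0, chemical potentials μ^k := ∂H/∂N_k. Suppose the phenomenological relations F_fr = -λ·(∂H/∂p) with λ an n×n matrix whose symmetric part is positive semidefinite, and 𝒥(k,ℓ) = G^{kℓ}·(μ^k - μ^ℓ) with G^{kℓ} ≥ 0 for all k,ℓ. If a curve satisfies q' = ∂H/∂p and the phenomenological constraint -(∂H/∂S)·S' = ⟨F_fr, q'⟩ + Σ_{k<ℓ} 𝒥(ℓ,k)·(μ^k - μ^ℓ), then S'(t) ≥ 0 for all t. -/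
open Matrix Function Finset

/-- Second law for a simple system with internal diffusion among `K`
compartments with mechanical variables: nonnegative entropy production. -/
theorem second_law_mass_transfer
    (n K : ℕ)
    (H : (Fin n → ℝ) → (Fin n → ℝ) → ℝ → (Fin K → ℝ) → ℝ)
    (hH : ContDiff ℝ (⊤ : ℕ∞) (fun x : (Fin n → ℝ) × (Fin n → ℝ) × ℝ × (Fin K → ℝ) =>
      H x.1 x.2.1 x.2.2.1 x.2.2.2))
    (q p : ℝ → Fin n → ℝ) (S : ℝ → ℝ) (N : ℝ → Fin K → ℝ)
    (hq : ContDiff ℝ (⊤ : ℕ∞) (fun t => q t)) (hp : ContDiff ℝ (⊤ : ℕ∞) (fun t => p t))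
    (hS : ContDiff ℝ (⊤ : ℕ∞) S) (hN : ContDiff ℝ (⊤ : ℕ∞) (fun t => N t))
    -- temperature and chemical potentials along the curve
    (T : ℝ → ℝ) (hT : ∀ t, T t = deriv (fun x => H (q t) (p t) x (N t)) (S t))
    (hTpos : ∀ t, 0 < T t)
    (μ : ℝ → Fin K → ℝ)
    (hμ : ∀ t k, μ t k =
      deriv (fun x => H (q t) (p t) (S t) (Function.update (N t) k x)) (N t k))
    -- phenomenological relations
    (lam : ℝ → Matrix (Fin n) (Fin n) ℝ)
    (hlam : ∀ t, (lam t + (lam t)ᵀ).PosSemidef)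
    (Ffr : ℝ → Fin n → ℝ)
    (hFfr : ∀ t i, Ffr t i = -∑ j, lam t i j *
      deriv (fun x => H (q t) (Function.update (p t) j x) (S t) (N t)) (p t j))
    (G : ℝ → Fin K → Fin K → ℝ) (hG : ∀ t k l, 0 ≤ G t k l)
    (J : ℝ → Fin K → Fin K → ℝ)
    (hJ : ∀ t k l, J t k l = G t k l * (μ t k - μ t l))
    (hJanti : ∀ t k l, J t l k = -J t k l)
    -- equations of motion and the phenomenological constraint
    (h1 : ∀ t i, deriv (fun s => q s i) t =
      deriv (fun x => H (q t) (Function.update (p t) i x) (S t) (N t)) (p t i))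
    (h2 : ∀ t, -(T t) * deriv S t
      = (∑ i, Ffr t i * deriv (fun s => q s i) t)
        + ∑ k, ∑ l ∈ Finset.univ.filter (fun l => k < l), J t l k * (μ t k - μ t l)) :
    ∀ t, 0 ≤ deriv S t := by
  intro t
  set v : Fin n → ℝ := fun i => deriv (fun s => q s i) t with hv
  have hQ : (∑ i, Ffr t i * v i) = -∑ i, ∑ j, lam t i j * v j * v i := by
    rw [← Finset.sum_neg_distrib]
    apply Finset.sum_congr rfl
    intro i _
    rw [hFfr t i, neg_mul, ← Finset.sum_neg_distrib, Finset.sum_mul,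
      ← Finset.sum_neg_distrib]
    apply Finset.sum_congr rfl
    intro j _
    rw [← h1 t j]
  have hquad : 0 ≤ ∑ i, ∑ j, lam t i j * v j * v i := by
    have h := (hlam t).dotProduct_mulVec_nonneg v
    have key : star v ⬝ᵥ (lam t + (lam t)ᵀ).mulVec v
        = 2 * ∑ i, ∑ j, lam t i j * v j * v i := by
      simp only [star_trivial, dotProduct, Matrix.mulVec, Matrix.add_apply,
        Matrix.transpose_apply, dotProduct, Finset.mul_sum]
      have hswap : ∑ x : Fin n, ∑ i : Fin n, v x * (lam t i x * v i)
          = ∑ x : Fin n, ∑ i : Fin n, v x * (lam t x i * v i) := by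
        rw [Finset.sum_comm]
        exact Finset.sum_congr rfl fun x _ => Finset.sum_congr rfl fun i _ => by ring
      simp only [add_mul, mul_add, Finset.sum_add_distrib, hswap]
      rw [← Finset.sum_add_distrib]
      refine Finset.sum_congr rfl fun x _ => ?_
      rw [← Finset.sum_add_distrib]
      exact Finset.sum_congr rfl fun i _ => by ring
    rw [key] at h
    linarith
  have hJterm : (∑ k, ∑ l ∈ Finset.univ.filter (fun l => k < l),
      J t l k * (μ t k - μ t l)) ≤ 0 := by
    apply Finset.sum_nonpos
    intro k _
    apply Finset.sum_nonpos
    intro l _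
    rw [hJanti, hJ]
    nlinarith [hG t k l, sq_nonneg (μ t k - μ t l)]
  have h2t := h2 t
  have hfr : (∑ i, Ffr t i * deriv (fun s => q s i) t) ≤ 0 := by
    have : (∑ i, Ffr t i * deriv (fun s => q s i) t) = ∑ i, Ffr t i * v i := rfl
    rw [this, hQ]; linarith
  have : 0 ≤ T t * deriv S t := by nlinarith
  exact nonneg_of_mul_nonneg_right this (hTpos t)
end

section
/- Assume the setting of the previous partial Legendre transform, and let F_ext, F_fr : ℝⁿ × ℝⁿ × ℝ → ℝⁿ be forces on the Lagrangian side with Hamiltonian-side counterparts ℱ_ext(q,p,S) := F_ext(q, v(q,p,S), S) and ℱ_fr similarly. Then a smooth curve (q(t), S(t)) satisfies the Lagrangian thermodynamic equations d/dt(∂L/∂v)(q,q',S) - ∂L/∂q(q,q',S) = F_fr(q,q',S) + F_ext(q,q',S) and (∂L/∂S)(q,q',S)·S' = ⟨F_fr(q,q',S), q'⟩ if and only if the curve (q(t), p(t) := (∂L/∂v)(q(t),q'(t),S(t)), S(t)) satisfies the Hamiltonian equations q' = ∂H/∂p, p' = -∂H/∂q + ℱ_fr + ℱ_ext, and -(∂H/∂S)·S'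 = ⟨ℱ_fr, q'⟩. -/
open Function

/-- Velocity curve of a curve `q : ℝ → ℝⁿ`. -/
noncomputable def qdot (n : ℕ) (q : ℝ → Fin n → ℝ) (t : ℝ) : Fin n → ℝ :=
  fun i => deriv (fun s => q s i) t

/-- Partial derivative `∂L/∂v` of a thermodynamic Lagrangian. -/
noncomputable def dLdv (n : ℕ) (L : (Fin n → ℝ) → (Fin n → ℝ) → ℝ → ℝ)
    (q v : Fin n → ℝ) (S : ℝ) : Fin n → ℝ :=
  fun i => deriv (fun x => L q (Function.update v i x) S) (v i)

section aux

variable {n : ℕ} {L : (Fin n → ℝ) → (Fin n → ℝ) → ℝ → ℝ}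


lemma hasDerivAt_update' (v : Fin n → ℝ) (i : Fin n) (y : ℝ) :
    HasDerivAt (fun x => Function.update v i x) (Pi.single i (1:ℝ)) y := by
  rw [hasDerivAt_pi]
  intro j
  rcases eq_or_ne j i with rfl | h
  · simpa [Function.update_apply] using hasDerivAt_id' y
  · simpa [Function.update_apply, h, Pi.single_apply] using hasDerivAt_const y (v j)

lemma chainL (hL : ContDiff ℝ (⊤ : ℕ∞) fun x : (Fin n → ℝ) × (Fin n → ℝ) × ℝ => L x.1 x.2.1 x.2.2)
    {a γ : ℝ → Fin n → ℝ} {b : ℝ → ℝ} {a' γ' : Fin n → ℝ} {b' x : ℝ}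
    (ha : HasDerivAt a a' x) (hγ : HasDerivAt γ γ' x) (hb : HasDerivAt b b' x) :
    HasDerivAt (fun s => L (a s) (γ s) (b s))
      (fderiv ℝ (fun y : (Fin n → ℝ) × (Fin n → ℝ) × ℝ => L y.1 y.2.1 y.2.2)
        (a x, γ x, b x) (a', γ', b')) x := by
  have hΦ : HasFDerivAt (fun y : (Fin n → ℝ) × (Fin n → ℝ) × ℝ => L y.1 y.2.1 y.2.2)
      (fderiv ℝ (fun y : (Fin n → ℝ) × (Fin n → ℝ) × ℝ => L y.1 y.2.1 y.2.2)
        (a x, γ x, b x)) (a x, γ x, b x) :=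
    ((hL.differentiable (by simp)) _).hasFDerivAt
  exact hΦ.comp_hasDerivAt x (ha.prodMk (hγ.prodMk hb))

lemma dir_v (hL : ContDiff ℝ (⊤ : ℕ∞) fun x : (Fin n → ℝ) × (Fin n → ℝ) × ℝ => L x.1 x.2.1 x.2.2)
    (q v : Fin n → ℝ) (S : ℝ) (i : Fin n) :
    fderiv ℝ (fun y : (Fin n → ℝ) × (Fin n → ℝ) × ℝ => L y.1 y.2.1 y.2.2) (q, v, S)
      ((0 : Fin n → ℝ), Pi.single i 1, (0:ℝ)) = dLdv n L q v S i := by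
  have h := chainL hL (hasDerivAt_const (v i) q) (hasDerivAt_update' v i (v i))
    (hasDerivAt_const (v i) S)
  simp only [Function.update_eq_self] at h
  exact (h.deriv).symm

lemma lin_v (hL : ContDiff ℝ (⊤ : ℕ∞) fun x : (Fin n → ℝ) × (Fin n → ℝ) × ℝ => L x.1 x.2.1 x.2.2)
    (q w : Fin n → ℝ) (S : ℝ) (u : Fin n → ℝ) :
    fderiv ℝ (fun y : (Fin n → ℝ) × (Fin n → ℝ) × ℝ => L y.1 y.2.1 y.2.2) (q, w, S)
      ((0 : Fin n → ℝ), u, (0:ℝ)) = ∑ j, u j * dLdv n L q w S j := by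
  have hu : ((0 : Fin n → ℝ), u, (0:ℝ))
      = ∑ j, u j • (((0 : Fin n → ℝ), Pi.single j (1:ℝ), (0:ℝ)) : (Fin n → ℝ) × (Fin n → ℝ) × ℝ) := by
    refine Prod.ext ?_ (Prod.ext ?_ ?_)
    · simp [Prod.fst_sum]
    · ext k
      simp [Prod.fst_sum, Prod.snd_sum, Finset.sum_apply, Pi.single_apply, mul_ite,
        Finset.sum_ite_eq]
    · simp [Prod.fst_sum, Prod.snd_sum]
  rw [hu, map_sum]
  refine Finset.sum_congr rfl fun j _ => ?_
  rw [map_smul, dir_v hL, smul_eq_mul]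

end aux

section master
variable {n : ℕ} {L : (Fin n → ℝ) → (Fin n → ℝ) → ℝ → ℝ}

lemma masterH
    (hL : ContDiff ℝ (⊤ : ℕ∞) fun x : (Fin n → ℝ) × (Fin n → ℝ) × ℝ => L x.1 x.2.1 x.2.2)
    (v : (Fin n → ℝ) → (Fin n → ℝ) → ℝ → Fin n → ℝ)
    (hvsmooth : ContDiff ℝ (⊤ : ℕ∞) fun x : (Fin n → ℝ) × (Fin n → ℝ) × ℝ => v x.1 x.2.1 x.2.2)
    (hv : ∀ q p S, dLdv n L q (v q p S) S = p)
    (H : (Fin n → ℝ) → (Fin n → ℝ) → ℝ → ℝ)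
    (hH : ∀ q p S, H q p S = (∑ i, p i * v q p S i) - L q (v q p S) S)
    {a b : ℝ → Fin n → ℝ} {c : ℝ → ℝ} {a' b' : Fin n → ℝ} {c' x0 : ℝ}
    (ha : HasDerivAt a a' x0) (hb : HasDerivAt b b' x0) (hc : HasDerivAt c c' x0) :
    HasDerivAt (fun x => H (a x) (b x) (c x))
      ((∑ j, b' j * v (a x0) (b x0) (c x0) j)
        - fderiv ℝ (fun y : (Fin n → ℝ) × (Fin n → ℝ) × ℝ => L y.1 y.2.1 y.2.2)
            (a x0, v (a x0) (b x0) (c x0), c x0) (a', 0, c')) x0 := by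
  set DΦ := fderiv ℝ (fun y : (Fin n → ℝ) × (Fin n → ℝ) × ℝ => L y.1 y.2.1 y.2.2)
      (a x0, v (a x0) (b x0) (c x0), c x0) with hDΦ
  set w : ℝ → Fin n → ℝ := fun x => v (a x) (b x) (c x) with hwdef
  set w' : Fin n → ℝ := fderiv ℝ (fun y : (Fin n → ℝ) × (Fin n → ℝ) × ℝ => v y.1 y.2.1 y.2.2)
      (a x0, b x0, c x0) (a', b', c') with hw'def
  have hV : HasFDerivAt (fun y : (Fin n → ℝ) × (Fin n → ℝ) × ℝ => v y.1 y.2.1 y.2.2)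
      (fderiv ℝ (fun y : (Fin n → ℝ) × (Fin n → ℝ) × ℝ => v y.1 y.2.1 y.2.2)
        (a x0, b x0, c x0)) (a x0, b x0, c x0) :=
    ((hvsmooth.differentiable (by simp)) _).hasFDerivAt
  have hwD : HasDerivAt w w' x0 := by have := hV.comp_hasDerivAt x0 (ha.prodMk (hb.prodMk hc)); exact this
  have hbj : ∀ j, HasDerivAt (fun x => b x j) (b' j) x0 := hasDerivAt_pi.mp hb
  have hwj : ∀ j, HasDerivAt (fun x => w x j) (w' j) x0 := hasDerivAt_pi.mp hwD
  have hsum : HasDerivAt (fun x => ∑ j, b x j * w x j)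
      (∑ j, (b' j * w x0 j + b x0 j * w' j)) x0 :=
    HasDerivAt.fun_sum fun j _ => (hbj j).mul (hwj j)
  have hLp : HasDerivAt (fun x => L (a x) (w x) (c x)) (DΦ (a', w', c')) x0 := by
    have := chainL hL ha hwD hc
    simpa [hDΦ] using this
  have hfun : (fun x => H (a x) (b x) (c x))
      = fun x => (∑ j, b x j * w x j) - L (a x) (w x) (c x) := by
    funext x
    rw [hH]
  have hsplit : ((a', w', c') : (Fin n → ℝ) × (Fin n → ℝ) × ℝ)
      = (a', (0 : Fin n → ℝ), c') + ((0 : Fin n → ℝ), w', (0:ℝ)) := by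
    refine Prod.ext ?_ (Prod.ext ?_ ?_) <;> simp
  have hval : (∑ j, (b' j * w x0 j + b x0 j * w' j)) - DΦ (a', w', c')
      = (∑ j, b' j * v (a x0) (b x0) (c x0) j) - DΦ (a', 0, c') := by
    rw [hsplit, map_add, hDΦ, lin_v hL, hv]
    rw [Finset.sum_add_distrib]
    have h2 : ∑ j, w' j * b x0 j = ∑ j, b x0 j * w' j :=
      Finset.sum_congr rfl fun j _ => mul_comm _ _
    rw [h2]
    have h3 : w x0 = v (a x0) (b x0) (c x0) := rfl
    rw [h3]
    ring
  rw [hfun, ← hval]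
  exact hsum.sub hLp
end master

/-- Equivalence of the Lagrangian and Hamiltonian evolution equations for
simple adiabatically closed thermodynamic systems, under hyperregularity of
`L` in the mechanical variables for each fixed entropy. -/
theorem lagrangian_hamiltonian_equivalence
    (n : ℕ) (L : (Fin n → ℝ) → (Fin n → ℝ) → ℝ → ℝ)
    (hL : ContDiff ℝ (⊤ : ℕ∞) (fun x : (Fin n → ℝ) × (Fin n → ℝ) × ℝ => L x.1 x.2.1 x.2.2))
    (hbij : ∀ q S, Function.Bijective (fun w : Fin n → ℝ => dLdv n L q w S))
    (v : (Fin n → ℝ) → (Fin n → ℝ) → ℝ → Fin n → ℝ)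
    (hvsmooth : ContDiff ℝ (⊤ : ℕ∞) (fun x : (Fin n → ℝ) × (Fin n → ℝ) × ℝ =>
      v x.1 x.2.1 x.2.2))
    (hv : ∀ q p S, dLdv n L q (v q p S) S = p)
    (H : (Fin n → ℝ) → (Fin n → ℝ) → ℝ → ℝ)
    (hH : ∀ q p S, H q p S = (∑ i, p i * v q p S i) - L q (v q p S) S)
    (Fext Ffr : (Fin n → ℝ) → (Fin n → ℝ) → ℝ → Fin n → ℝ)
    (ℱext ℱfr : (Fin n → ℝ) → (Fin n → ℝ) → ℝ → Fin n → ℝ)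
    (hℱext : ∀ q p S, ℱext q p S = Fext q (v q p S) S)
    (hℱfr : ∀ q p S, ℱfr q p S = Ffr q (v q p S) S)
    (q : ℝ → Fin n → ℝ) (S : ℝ → ℝ)
    (hq : ContDiff ℝ (⊤ : ℕ∞) (fun t => q t)) (hS : ContDiff ℝ (⊤ : ℕ∞) S)
    (p : ℝ → Fin n → ℝ)
    (hp : ∀ t, p t = dLdv n L (q t) (qdot n q t) (S t)) :
    -- Lagrangian thermodynamic equations
    ((∀ t i, deriv (fun s => dLdv n L (q s) (qdot n q s) (S s) i) t
        - deriv (fun x => L (Function.update (q t) i x) (qdot n q t) (S t)) (q t i)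
        = Ffr (q t) (qdot n q t) (S t) i + Fext (q t) (qdot n q t) (S t) i) ∧
     (∀ t, deriv (fun x => L (q t) (qdot n q t) x) (S t) * deriv S t
        = ∑ i, Ffr (q t) (qdot n q t) (S t) i * qdot n q t i))
    ↔
    -- Hamiltonian thermodynamic equations
    ((∀ t i, qdot n q t i =
        deriv (fun x => H (q t) (Function.update (p t) i x) (S t)) (p t i)) ∧
     (∀ t i, deriv (fun s => p s i) t =
        -deriv (fun x => H (Function.update (q t) i x) (p t) (S t)) (q t i)
        + ℱfr (q t) (p t) (S t) i + ℱext (q t) (p t) (S t) i) ∧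
     (∀ t, -(deriv (fun x => H (q t) (p t) x) (S t)) * deriv S t
        = ∑ i, ℱfr (q t) (p t) (S t) i * qdot n q t i)) := by
  have hvq : ∀ t, v (q t) (p t) (S t) = qdot n q t := fun t =>
    (hbij (q t) (S t)).injective
      (show dLdv n L (q t) (v (q t) (p t) (S t)) (S t)
          = dLdv n L (q t) (qdot n q t) (S t) by rw [hv, ← hp])
  have claimA : ∀ t i, deriv (fun x => H (q t) (Function.update (p t) i x) (S t)) (p t i)
      = qdot n q t i := by
    intro t i
    have h := masterH hL v hvsmooth hv H hH (hasDerivAt_const (p t i) (q t))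
      (hasDerivAt_update' (p t) i (p t i)) (hasDerivAt_const (p t i) (S t))
    simp only [Function.update_eq_self] at h
    refine h.deriv.trans ?_
    rw [hvq t]
    have hz : ((0 : Fin n → ℝ), (0 : Fin n → ℝ), (0:ℝ))
        = (0 : (Fin n → ℝ) × (Fin n → ℝ) × ℝ) := rfl
    rw [hz, map_zero]
    simp [Pi.single_apply, ite_mul, Finset.sum_ite_eq]
  have claimB : ∀ t i, deriv (fun x => H (Function.update (q t) i x) (p t) (S t)) (q t i)
      = - deriv (fun x => L (Function.update (q t) i x) (qdot n q t) (S t)) (q t i) := by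
    intro t i
    have h := masterH hL v hvsmooth hv H hH (hasDerivAt_update' (q t) i (q t i))
      (hasDerivAt_const (q t i) (p t)) (hasDerivAt_const (q t i) (S t))
    simp only [Function.update_eq_self] at h
    have h2 := chainL hL (hasDerivAt_update' (q t) i (q t i))
      (hasDerivAt_const (q t i) (qdot n q t)) (hasDerivAt_const (q t i) (S t))
    simp only [Function.update_eq_self] at h2
    refine h.deriv.trans ?_
    rw [h2.deriv, hvq t]
    simp
  have claimC : ∀ t, deriv (fun x => H (q t) (p t) x) (S t)
      = - deriv (fun x => L (q t) (qdot n q t) x) (S t) := by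
    intro t
    have h := masterH hL v hvsmooth hv H hH (hasDerivAt_const (S t) (q t))
      (hasDerivAt_const (S t) (p t)) (hasDerivAt_id (S t))
    have h2 := chainL hL (hasDerivAt_const (S t) (q t))
      (hasDerivAt_const (S t) (qdot n q t)) (hasDerivAt_id (S t))
    simp only [id_eq] at h h2
    refine h.deriv.trans ?_
    rw [h2.deriv, hvq t]
    simp
  have hps : ∀ i, (fun s => p s i) = fun s => dLdv n L (q s) (qdot n q s) (S s) i :=
    fun i => funext fun s => by rw [hp]
  constructor
  · rintro ⟨hLag1, hLag2⟩
    refine ⟨fun t i => (claimA t i).symm, fun t i => ?_, fun t => ?_⟩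
    · rw [hps i, claimB t i, hℱfr, hℱext, hvq t]
      have := hLag1 t i
      linarith
    · rw [claimC t, hℱfr, hvq t]
      have := hLag2 t
      simpa [neg_neg] using this
  · rintro ⟨h1, h2, h3⟩
    constructor
    · intro t i
      have hh := h2 t i
      rw [hps i, claimB t i, hℱfr, hℱext, hvq t] at hh
      linarith
    · intro t
      have hh := h3 t
      rw [claimC t, hℱfr, hvq t] at hh
      simpa [neg_neg] using hh
end
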